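/- Let H be a subgroup of a finite group G with H ≠ L(H, Aut(G)). Suppose p is the smallest prime dividing |Aut(G)| and q is the smallest prime dividing |H|, and Pr(H, Aut(G)) = (p + q − 1)/(pq). Then the quotient group H / L(H, Aut(G)) is isomorphic to the cyclic group ℤ_q of order q. -/

import Mathlib

open scoped Classical

variable {G : Type*}

/-- The relative autocommutativity degree `Pr(H, Aut(G))`: the probability that a randomly
chosen automorphism of `G` fixes a randomly chosen element of the subgroup `H`. -/
noncomputable def autPr [Group G] (H : Subgroup G) : ℚ :=
  (Nat.card {p : H × MulAut G // p.2 (p.1 : G) = (p.1 : G)} : ℚ) /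
    ((Nat.card H : ℚ) * (Nat.card (MulAut G) : ℚ))

/-- `L(H, Aut(G))`, the subgroup of elements of `H` fixed by every automorphism of `G`. -/
def autFix [Group G] (H : Subgroup G) : Subgroup G where
  carrier := {x | x ∈ H ∧ ∀ α : MulAut G, α x = x}
  one_mem' := ⟨H.one_mem, fun α => map_one α⟩
  mul_mem' := fun ha hb => ⟨H.mul_mem ha.1 hb.1, fun α => by
    rw [map_mul, ha.2 α, hb.2 α]⟩
  inv_mem' := fun ha => ⟨H.inv_mem ha.1, fun α => by rw [map_inv, ha.2 α]⟩

instance autFix_normal [Group G] (H : Subgroup G) : ((autFix H).subgroupOf H).Normal := by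
  constructor
  intro n hn g
  rw [Subgroup.mem_subgroupOf] at hn ⊢
  obtain ⟨-, hfix⟩ := hn
  have hcen : ∀ c : G, c * (n : G) = (n : G) * c := by
    intro c
    have h := hfix (MulAut.conj c)
    simp only [MulAut.conj_apply] at h
    exact mul_inv_eq_iff_eq_mul.mp h
  have hconj : ∀ c : G, c * (n : G) * c⁻¹ = (n : G) := by
    intro c
    rw [hcen c, mul_inv_cancel_right]
  refine ⟨(g * n * g⁻¹).2, fun α => ?_⟩
  push_cast
  rw [map_mul, map_mul, map_inv, hfix α, hconj (α g), hconj (g : G)]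

/-- `X_H`: the set of elements of `H` whose centralizer in `Aut(G)` is trivial, i.e. the only
automorphism fixing them is the identity. -/
def autX [Group G] (H : Subgroup G) : Set H :=
  {x | ∀ α : MulAut G, α (x : G) = x → α = 1}

/-- `S(H, Aut(G))`: the set of autocommutators `[x, α] = x⁻¹ α(x)` with `x ∈ H`, `α ∈ Aut(G)`. -/
def autS [Group G] (H : Subgroup G) : Set G :=
  {g | ∃ x ∈ H, ∃ α : MulAut G, g = x⁻¹ * α x}

/-- Every autocommutator `x⁻¹ α(x)` with `x ∈ H` lies in `[H, Aut(G)] = ⟨S(H, Aut(G))⟩`. -/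
lemma autcomm_mem_closure [Group G] (H : Subgroup G) (x : H) (α : MulAut G) :
    (x : G)⁻¹ * α x ∈ Subgroup.closure (autS H) :=
  Subgroup.subset_closure ⟨x, x.2, α, rfl⟩

/-!
Write `A = Aut(G)`, `L = L(H, Aut(G))` and `m = [H : L]`. Counting fixed pairs fibrewise,
`Pr(H, A) · |H| · |A| = ∑_{x ∈ H} |C_A(x)|`. For `x ∈ L` the centralizer is all of `A`; otherwise it
is a proper subgroup, whose index divides `|A|` and so is at least `p`. Hence
`Pr(H, A) ≤ (m + p - 1) / (p m)`, which decreases strictly in `m`, so the hypothesis forces `m ≤ q`.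
Since `m ≠ 1` divides `|H|`, also `q ≤ m`; thus `H / L` has prime order `q` and is cyclic.
-/

lemma le_of_dvd_of_forall_prime_dvd_le {p n m : ℕ} (hm : m ≠ 0) (hnm : n ∣ m) (hn : n ≠ 1)
    (hmin : ∀ r : ℕ, r.Prime → r ∣ m → p ≤ r) : p ≤ n :=
  (hmin _ (Nat.minFac_prime hn) ((Nat.minFac_dvd n).trans hnm)).trans
    (Nat.minFac_le (Nat.pos_of_dvd_of_pos hnm (Nat.pos_of_ne_zero hm)))

namespace MulAction

variable {A α : Type*} [Group A] [MulAction A α]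

lemma card_fixedPairs_eq_sum_card_stabilizer [Finite A] {ι : Type*} [Fintype ι] (f : ι → α) :
    Nat.card {r : ι × A // r.2 • f r.1 = f r.1} = ∑ i, Nat.card (stabilizer A (f i)) := by
  rw [Nat.card_congr (Equiv.subtypeProdEquivSigmaSubtype fun i (a : A) => a • f i = f i),
    Nat.card_sigma]
  rfl

lemma mul_card_stabilizer_le [Finite A] {p : ℕ}
    (hmin : ∀ r : ℕ, r.Prime → r ∣ Nat.card A → p ≤ r) {x : α} (hx : ∃ a : A, a • x ≠ x) :
    p * Nat.card (stabilizer A x) ≤ Nat.card A := by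
  have hne : stabilizer A x ≠ ⊤ := by
    obtain ⟨a, ha⟩ := hx
    exact fun htop => ha (mem_stabilizer_iff.mp (htop ▸ Subgroup.mem_top a))
  have hp : p ≤ (stabilizer A x).index :=
    le_of_dvd_of_forall_prime_dvd_le Nat.card_pos.ne' (stabilizer A x).index_dvd_card
      (mt Subgroup.index_eq_one.mp hne) hmin
  calc p * Nat.card (stabilizer A x) ≤ (stabilizer A x).index * Nat.card (stabilizer A x) :=
        Nat.mul_le_mul_right _ hp
    _ = Nat.card A := by rw [mul_comm, Subgroup.card_mul_index]

end MulAction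

section

variable [Group G]

lemma mem_autFix_subgroupOf_iff {H : Subgroup G} {x : H} :
    x ∈ (autFix H).subgroupOf H ↔ ∀ α : MulAut G, α (x : G) = x := by
  rw [Subgroup.mem_subgroupOf]
  exact ⟨And.right, fun h => ⟨x.2, h⟩⟩

variable [Fintype G]

lemma autPr_mul_card_eq_sum_card_stabilizer (H : Subgroup G) :
    autPr H * (Nat.card H * Nat.card (MulAut G)) =
      ∑ x : H, (Nat.card (MulAction.stabilizer (MulAut G) (x : G)) : ℚ) := by
  have hpos : (0 : ℚ) < Nat.card H * Nat.card (MulAut G) := by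
    exact_mod_cast Nat.mul_pos Nat.card_pos Nat.card_pos
  rw [autPr, div_mul_cancel₀ _ hpos.ne', ← Nat.cast_sum,
    ← MulAction.card_fixedPairs_eq_sum_card_stabilizer]
  rfl

lemma mul_sum_card_stabilizer_le (H : Subgroup G) {p : ℕ}
    (hpmin : ∀ r : ℕ, r.Prime → r ∣ Nat.card (MulAut G) → p ≤ r) :
    (p : ℚ) * ∑ x : H, (Nat.card (MulAction.stabilizer (MulAut G) (x : G)) : ℚ) ≤
      Nat.card (MulAut G) * (Nat.card H + (p - 1) * Nat.card ((autFix H).subgroupOf H)) := by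
  set L := (autFix H).subgroupOf H
  have hpointwise : ∀ x : H, (p : ℚ) * Nat.card (MulAction.stabilizer (MulAut G) (x : G)) ≤
      Nat.card (MulAut G) + if x ∈ L then ((p : ℚ) - 1) * Nat.card (MulAut G) else 0 := by
    intro x
    split_ifs with hx
    · rw [mem_autFix_subgroupOf_iff] at hx
      have htop : MulAction.stabilizer (MulAut G) (x : G) = ⊤ :=
        eq_top_iff.mpr fun α _ => MulAction.mem_stabilizer_iff.mpr (hx α)
      rw [htop, Subgroup.card_top]
      linarith
    · rw [mem_autFix_subgroupOf_iff] at hx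
      push Not at hx
      rw [add_zero]
      exact_mod_cast MulAction.mul_card_stabilizer_le hpmin hx
  have hcard : Nat.card L = (Finset.univ.filter (· ∈ L)).card := by
    rw [Nat.card_eq_fintype_card, Fintype.card_subtype]
  calc (p : ℚ) * ∑ x : H, (Nat.card (MulAction.stabilizer (MulAut G) (x : G)) : ℚ)
      ≤ ∑ x : H, ((Nat.card (MulAut G) : ℚ) +
          if x ∈ L then ((p : ℚ) - 1) * Nat.card (MulAut G) else 0) := by
        rw [Finset.mul_sum]
        exact Finset.sum_le_sum fun x _ => hpointwise x
    _ = Nat.card (MulAut G) * (Nat.card H + (p - 1) * Nat.card L) := by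
        rw [Finset.sum_add_distrib, Finset.sum_const, Finset.card_univ, ← Nat.card_eq_fintype_card,
          ← Finset.sum_filter, Finset.sum_const, ← hcard, nsmul_eq_mul, nsmul_eq_mul]
        ring

lemma autPr_le (H : Subgroup G) {p : ℕ} (hp : 0 < p)
    (hpmin : ∀ r : ℕ, r.Prime → r ∣ Nat.card (MulAut G) → p ≤ r) :
    autPr H ≤ ((p : ℚ) + ((autFix H).subgroupOf H).index - 1) /
      (p * ((autFix H).subgroupOf H).index) := by
  have hbound := mul_sum_card_stabilizer_le H hpmin
  rw [← autPr_mul_card_eq_sum_card_stabilizer] at hbound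
  set L := (autFix H).subgroupOf H
  have hH : (Nat.card H : ℚ) = Nat.card L * L.index := by exact_mod_cast L.card_mul_index.symm
  have hm : (0 : ℚ) < L.index := by exact_mod_cast Nat.pos_of_ne_zero L.index_ne_zero_of_finite
  have hp' : (0 : ℚ) < p := by exact_mod_cast hp
  rw [hH] at hbound
  rw [le_div_iff₀ (by positivity)]
  have hpos : (0 : ℚ) < Nat.card (MulAut G) * Nat.card L := by
    exact_mod_cast Nat.mul_pos Nat.card_pos Nat.card_pos
  refine le_of_mul_le_mul_right ?_ hpos
  linear_combination hbound

end

lemma le_of_add_sub_one_div_mul_le {p m q : ℚ} (hp : 1 < p) (hm : 0 < m) (hq : 0 < q)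
    (h : (p + q - 1) / (p * q) ≤ (p + m - 1) / (p * m)) : m ≤ q := by
  rw [div_le_div_iff₀ (by positivity) (by positivity)] at h
  nlinarith [mul_pos (sub_pos.mpr hp) (by positivity : (0 : ℚ) < p)]

theorem stmt9_general [Group G] [Fintype G] (H : Subgroup G)
    (hne : H ≠ autFix H) (p q : ℕ)
    (hp : p.Prime)
    (hpmin : ∀ r : ℕ, r.Prime → r ∣ Nat.card (MulAut G) → p ≤ r)
    (hq : q.Prime)
    (hqmin : ∀ r : ℕ, r.Prime → r ∣ Nat.card H → q ≤ r)
    (h : autPr H = ((p : ℚ) + (q : ℚ) - 1) / ((p : ℚ) * (q : ℚ))) :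
    Nonempty ((H ⧸ (autFix H).subgroupOf H) ≃* Multiplicative (ZMod q)) := by
  set L := (autFix H).subgroupOf H
  have hle : L.index ≤ q := by
    have := h ▸ autPr_le H hp.pos hpmin
    exact_mod_cast le_of_add_sub_one_div_mul_le (by exact_mod_cast hp.one_lt)
      (by exact_mod_cast Nat.pos_of_ne_zero L.index_ne_zero_of_finite)
      (by exact_mod_cast hq.pos) this
  have hL : L.index ≠ 1 := fun h1 =>
    hne (le_antisymm (Subgroup.subgroupOf_eq_top.mp (Subgroup.index_eq_one.mp h1)) fun _ hx => hx.1)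
  have hge : q ≤ L.index :=
    le_of_dvd_of_forall_prime_dvd_le Nat.card_pos.ne' L.index_dvd_card hL hqmin
  have hcard : Nat.card (H ⧸ L) = q := le_antisymm hle hge
  have : Fact q.Prime := ⟨hq⟩
  exact ⟨hcard ▸ (zmodCyclicMulEquiv (isCyclic_of_prime_card hcard)).symm⟩

theorem stmt9 [Group G] [Fintype G] [DecidableEq G] (H : Subgroup G)
    (hne : H ≠ autFix H) (p q : ℕ)
    (hp : p.Prime) (hpdvd : p ∣ Nat.card (MulAut G))
    (hpmin : ∀ r : ℕ, r.Prime → r ∣ Nat.card (MulAut G) → p ≤ r)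
    (hq : q.Prime) (hqdvd : q ∣ Nat.card H)
    (hqmin : ∀ r : ℕ, r.Prime → r ∣ Nat.card H → q ≤ r)
    (h : autPr H = ((p : ℚ) + (q : ℚ) - 1) / ((p : ℚ) * (q : ℚ))) :
    Nonempty ((H ⧸ (autFix H).subgroupOf H) ≃* Multiplicative (ZMod q)) :=
  stmt9_general H hne p q hp hpmin hq hqmin h
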